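/- Let K_ν = F_q((θ⁻¹)) with q odd, let Q(x) = 2x₁x₃ − x₂², and let L ⊂ K_ν³ be a lattice (a cocompact discrete O-submodule of rank 3). Then for every t₀ ∈ K_ν and r₀ > 0 there exists a nonzero vector v ∈ v₂(B(t₀,r₀))·L such that Q(v) = 0, where B(t₀,r₀) is the open ball of radius r₀ around t₀ and v₂(s) is the unipotent matrix with parameter s in the (1,3) entry. -/

import Mathlib

set_option synthInstance.maxHeartbeats 800000
set_option maxHeartbeats 1000000

noncomputable section

abbrev Kv (F : Type) [Field F] := LaurentSeries F

def theta (F : Type) [Field F] : Kv F := HahnSeries.single (-1) 1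

/-- The embedding of the ring of `ν`-integers `O_ν = F_q[θ]` into `K_ν`. -/
def polyMap (F : Type) [Field F] : Polynomial F →+* Kv F :=
  (Polynomial.aeval (theta F)).toRingHom

/-! Since `Q(v₂(t)u) = 2t·u₃² + Q(u)`, every `u` with `u₃ ≠ 0` is made isotropic by `v₂(q(u))`,
`q(u) = −Q(u)/(2u₃²)`. By cocompactness `L` meets every ball of a fixed radius `R`, in particular
the one around `w = (−t₀w₃, 0, w₃)`. For a lattice point `u` in it,
`q(u) − t₀ = u₂²/(2u₃²) − (u₁ + t₀u₃)/u₃` with `|u₃| = |w₃|`, `|u₂| ≤ R`, `|u₁ + t₀u₃| ≤ R·max(1, |t₀|)`,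
so `|q(u) − t₀| < γ` as soon as `w₃ = θⁿ` with `n` large. (Here coordinates are numbered from 1,
so `u₃` is `u 2` in the code.) -/

open Filter WithZero Matrix

section Isotropic

variable {K : Type*} [Field K]

def quadForm (u : Fin 3 → K) : K := 2 * u 0 * u 2 - u 1 ^ 2

def unipotent₁₃ (t : K) : Matrix (Fin 3) (Fin 3) K := !![1, 0, t; 0, 1, 0; 0, 0, 1]

/-- The paper's `q(u)`; it is the junk value `0` when `u 2 = 0`. -/
def isotropicParam (u : Fin 3 → K) : K := -quadForm u / (2 * u 2 ^ 2)

lemma unipotent₁₃_mulVec (t : K) (u : Fin 3 → K) :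
    unipotent₁₃ t *ᵥ u = ![u 0 + t * u 2, u 1, u 2] := by
  ext i
  fin_cases i <;> simp [unipotent₁₃, Matrix.mulVec, dotProduct, Fin.sum_univ_three]

lemma unipotent₁₃_mulVec_ne_zero (t : K) {u : Fin 3 → K} (hu : u 2 ≠ 0) :
    unipotent₁₃ t *ᵥ u ≠ 0 := fun h ↦ hu <| by
  simpa [unipotent₁₃_mulVec] using congrFun h 2

lemma quadForm_unipotent₁₃_mulVec (t : K) (u : Fin 3 → K) :
    quadForm (unipotent₁₃ t *ᵥ u) = 2 * t * u 2 ^ 2 + quadForm u := by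
  simp only [quadForm, unipotent₁₃_mulVec, cons_val_zero, cons_val_one, cons_val]
  ring

lemma quadForm_unipotent₁₃_isotropicParam_mulVec (h2 : (2 : K) ≠ 0) {u : Fin 3 → K}
    (hu : u 2 ≠ 0) : quadForm (unipotent₁₃ (isotropicParam u) *ᵥ u) = 0 := by
  rw [quadForm_unipotent₁₃_mulVec, isotropicParam]
  field_simp
  ring

lemma isotropicParam_sub_eq (h2 : (2 : K) ≠ 0) {u : Fin 3 → K} (hu : u 2 ≠ 0) (t : K) :
    isotropicParam u - t = u 1 ^ 2 / (2 * u 2 ^ 2) - (u 0 + t * u 2) / u 2 := by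
  rw [isotropicParam, quadForm]
  field_simp
  ring

end Isotropic

section Valuation

variable {K Γ₀ : Type*} [Field K] [LinearOrderedCommGroupWithZero Γ₀] (v : Valuation K Γ₀)

lemma valuation_isotropicParam_sub_lt (h2 : (2 : K) ≠ 0) {u : Fin 3 → K} (hu : u 2 ≠ 0)
    {t : K} {γ : Γ₀} (h1 : v (u 1) ^ 2 < γ * v 2 * v (u 2) ^ 2)
    (h0 : v (u 0 + t * u 2) < γ * v (u 2)) : v (isotropicParam u - t) < γ := by
  have hvu : 0 < v (u 2) := v.pos_iff.2 hu
  rw [isotropicParam_sub_eq h2 hu]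
  refine (v.map_sub _ _).trans_lt (max_lt ?_ ?_)
  · rwa [map_div₀, map_mul, map_pow, map_pow,
      div_lt_iff₀ (mul_pos (v.pos_iff.2 h2) (pow_pos hvu 2)), ← mul_assoc]
  · rwa [map_div₀, div_lt_iff₀ hvu]

lemma valuation_isotropicParam_sub_lt_of_near (h2 : (2 : K) ≠ 0) {t w₃ : K} {u : Fin 3 → K}
    {R γ : Γ₀} (hu : ∀ i, v ((u - ![-t * w₃, 0, w₃]) i) ≤ R) (hR : R < v w₃)
    (h1 : R ^ 2 < γ * v 2 * v w₃ ^ 2) (h0 : R < γ * v w₃) (ht : v t * R < γ * v w₃) :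
    u 2 ≠ 0 ∧ v (isotropicParam u - t) < γ := by
  have hu0 : v (u 0 + t * w₃) ≤ R := by simpa using hu 0
  have hu1 : v (u 1) ≤ R := by simpa using hu 1
  have hu2 : v (u 2 - w₃) ≤ R := by simpa using hu 2
  have hvu2 : v (u 2) = v w₃ := by
    simpa using v.map_add_eq_of_lt_left (x := w₃) (y := u 2 - w₃) (hu2.trans_lt hR)
  have hu2ne : u 2 ≠ 0 := v.pos_iff.1 (hvu2 ▸ zero_le.trans_lt hR)
  refine ⟨hu2ne, valuation_isotropicParam_sub_lt v h2 hu2ne ?_ ?_⟩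
  · rw [hvu2]
    exact (pow_le_pow_left₀ zero_le hu1 2).trans_lt h1
  · have : u 0 + t * u 2 = (u 0 + t * w₃) + t * (u 2 - w₃) := by ring
    rw [this, hvu2]
    refine (v.map_add _ _).trans_lt (max_lt (hu0.trans_lt h0) ?_)
    rw [map_mul]
    calc v t * v (u 2 - w₃) ≤ v t * R := by gcongr
      _ < γ * v w₃ := ht

end Valuation

lemma IsCompact.exists_forall_valuation_le {R Γ₀ : Type*} [Ring R]
    [LinearOrderedCommGroupWithZero Γ₀] [Valued R Γ₀] {C : Set R} (hC : IsCompact C) :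
    ∃ M : Γ₀, ∀ c ∈ C, Valued.v c ≤ M := by
  obtain ⟨t, -, hcover⟩ := hC.elim_nhds_subcover (fun c ↦ {y | Valued.v (y - c) < 1})
    (fun c _ ↦ Valued.mem_nhds.2 ⟨1, fun y hy ↦ by simpa using hy⟩)
  refine ⟨t.sup fun c ↦ max 1 (Valued.v c), fun x hx ↦ ?_⟩
  obtain ⟨c, hct, hxc⟩ := Set.mem_iUnion₂.1 (hcover hx)
  calc Valued.v x = Valued.v ((x - c) + c) := by rw [sub_add_cancel]
    _ ≤ max (Valued.v (x - c)) (Valued.v c) := Valued.v.map_add _ _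
    _ ≤ max 1 (Valued.v c) := max_le_max hxc.le le_rfl
    _ ≤ _ := Finset.le_sup (f := fun c ↦ max 1 (Valued.v c)) hct

lemma IsCompact.exists_forall_valuation_apply_le {R Γ₀ ι : Type*} [Ring R]
    [LinearOrderedCommGroupWithZero Γ₀] [Valued R Γ₀] [Finite ι] {C : Set (ι → R)}
    (hC : IsCompact C) : ∃ M : Γ₀, ∀ c ∈ C, ∀ i, Valued.v (c i) ≤ M := by
  have (i : ι) : ∃ M : Γ₀, ∀ c ∈ C, Valued.v (c i) ≤ M := by
    simpa using (hC.image (continuous_apply i)).exists_forall_valuation_le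
  choose M hM using this
  obtain ⟨B, hB⟩ := (Set.finite_range M).bddAbove
  exact ⟨B, fun c hc i ↦ (hM i c hc).trans (hB ⟨i, rfl⟩)⟩

lemma WithZero.eventually_lt_mul_exp_pow (a : ℤᵐ⁰) {b : ℤᵐ⁰} (hb : b ≠ 0) {k : ℕ} (hk : k ≠ 0) :
    ∀ᶠ n : ℤ in atTop, a < b * exp n ^ k := by
  filter_upwards [eventually_gt_atTop (log a - log b), eventually_ge_atTop 0] with n h1 h0
  have : n ≤ k * n := le_mul_of_one_le_left h0 (by exact_mod_cast Nat.one_le_iff_ne_zero.2 hk)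
  calc a ≤ exp (log a) := le_exp_log
    _ < exp (log b + k * n) := exp_lt_exp.2 (by linarith)
    _ = b * exp n ^ k := by rw [exp_add, exp_log hb, ← exp_nsmul, nsmul_eq_mul]

lemma valuation_theta_zpow (F : Type) [Field F] (n : ℤ) : Valued.v (theta F ^ n) = exp n := by
  rw [map_zpow₀, theta, LaurentSeries.valuation_single_zpow, ← WithZero.exp_zsmul]
  simp

theorem stmt_9_general (F : Type) [Field F] (hodd : ringChar F ≠ 2)
    (Q : (Fin 3 → Kv F) → Kv F)
    (hQ : ∀ u : Fin 3 → Kv F, Q u = 2 * u 0 * u 2 - (u 1) ^ 2)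
    (v₂ : Kv F → Matrix (Fin 3) (Fin 3) (Kv F))
    (hv₂ : ∀ t : Kv F, v₂ t = !![1, 0, t; 0, 1, 0; 0, 0, 1])
    (L : AddSubgroup (Fin 3 → Kv F))
    (hcocompact : ∃ C : Set (Fin 3 → Kv F), IsCompact C ∧ ∀ x, ∃ l ∈ L, x + l ∈ C)
    (t₀ : Kv F) (γ : (WithZero (Multiplicative ℤ))ˣ) :
    ∃ s : Kv F, Valued.v (s - t₀) < (γ : WithZero (Multiplicative ℤ)) ∧
      ∃ l ∈ L, (v₂ s).mulVec l ≠ 0 ∧ Q ((v₂ s).mulVec l) = 0 := by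
  obtain rfl : Q = quadForm := funext hQ
  obtain rfl : v₂ = unipotent₁₃ := funext hv₂
  have h2 : (2 : Kv F) ≠ 0 := by
    rw [← map_ofNat (algebraMap F (Kv F)) 2]
    exact (map_ne_zero _).2 (Ring.two_ne_zero hodd)
  obtain ⟨C, hC, hcover⟩ := hcocompact
  obtain ⟨R, hR⟩ := hC.exists_forall_valuation_apply_le
  have hγ : (γ : ℤᵐ⁰) * Valued.v (2 : Kv F) ≠ 0 :=
    mul_ne_zero γ.ne_zero (Valued.v.ne_zero_iff.2 h2)
  obtain ⟨n, hRn, h1, h0, ht⟩ := ((eventually_lt_mul_exp_pow R one_ne_zero one_ne_zero).and <|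
    (eventually_lt_mul_exp_pow (R ^ 2) hγ two_ne_zero).and <|
    (eventually_lt_mul_exp_pow R γ.ne_zero one_ne_zero).and <|
    eventually_lt_mul_exp_pow (Valued.v t₀ * R) γ.ne_zero one_ne_zero).exists
  simp only [pow_one, one_mul] at hRn h0 ht
  rw [← valuation_theta_zpow F n] at hRn h1 h0 ht
  obtain ⟨l, hlL, hlC⟩ := hcover (-![-t₀ * theta F ^ n, 0, theta F ^ n])
  obtain ⟨hl, hs⟩ := valuation_isotropicParam_sub_lt_of_near Valued.v h2 (u := l)
    (fun i ↦ sub_eq_neg_add l _ ▸ hR _ hlC i) hRn h1 h0 ht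
  exact ⟨_, hs, l, hlL, unipotent₁₃_mulVec_ne_zero _ hl,
    quadForm_unipotent₁₃_isotropicParam_mulVec h2 hl⟩

/-- For every lattice `L ⊂ K_ν³` (a discrete cocompact `O_ν`-submodule) and every open ball
`B(t₀, γ)` in `K_ν`, there is `s ∈ B(t₀, γ)` and a nonzero `v ∈ v₂(s)·L` with `Q(v) = 0`,
where `Q(x) = 2x₁x₃ − x₂²`. -/
theorem stmt_9 (F : Type) [Field F] [Fintype F] (hodd : ringChar F ≠ 2)
    (Q : (Fin 3 → Kv F) → Kv F)
    (hQ : ∀ u : Fin 3 → Kv F, Q u = 2 * u 0 * u 2 - (u 1) ^ 2)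
    (v₂ : Kv F → Matrix (Fin 3) (Fin 3) (Kv F))
    (hv₂ : ∀ t : Kv F, v₂ t = !![1, 0, t; 0, 1, 0; 0, 0, 1])
    (L : AddSubgroup (Fin 3 → Kv F))
    (hmod : ∀ p : Polynomial F, ∀ l ∈ L, (fun i => polyMap F p * l i) ∈ L)
    (hdisc : DiscreteTopology L)
    (hcocompact : ∃ C : Set (Fin 3 → Kv F), IsCompact C ∧ ∀ x, ∃ l ∈ L, x + l ∈ C)
    (t₀ : Kv F) (γ : (WithZero (Multiplicative ℤ))ˣ) :
    ∃ s : Kv F, Valued.v (s - t₀) < (γ : WithZero (Multiplicative ℤ)) ∧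
      ∃ l ∈ L, (v₂ s).mulVec l ≠ 0 ∧ Q ((v₂ s).mulVec l) = 0 :=
  stmt_9_general F hodd Q hQ v₂ hv₂ L hcocompact t₀ γ

end
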